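/- Let A be a positive definite Hermitian N×N complex matrix. Then the Gaussian integral ∫_{ℂ^N} exp(−(1/2) z̄ᵀ A z) dm(z), where dm is Lebesgue measure on ℂ^N ≅ ℝ^{2N}, equals (2π)^N / det(A). -/

import Mathlib

/-!
Diagonalize `A = U diag(λ) Uᴴ` with `U` unitary. The substitution `z = U w` preserves Lebesgue
measure on `ℂ^N ≅ ℝ^{2N}`, since its real determinant is `|det U|² = 1`, and turns the integrand
into `∏ᵢ exp(-λᵢ |wᵢ|² / 2)`. Each factor integrates to `2π / λᵢ`, and `∏ᵢ λᵢ = det A`.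
-/

open MeasureTheory Real Matrix
open scoped ComplexOrder

namespace Matrix

variable {ι : Type*} [Fintype ι] [DecidableEq ι]

theorem measurePreserving_mulVec_of_mem_unitaryGroup {U : Matrix ι ι ℂ}
    (hU : U ∈ unitaryGroup ι ℂ) :
    MeasurePreserving (U *ᵥ ·) (volume : Measure (ι → ℂ)) volume := by
  let f : (ι → ℂ) →ₗ[ℝ] (ι → ℂ) := (toLin' U).restrictScalars ℝ
  -- the real determinant of a complex-linear map is the norm `|det|²` of its complex determinant
  have hdet : LinearMap.det f = 1 := by
    rw [LinearMap.det_restrictScalars, LinearMap.det_toLin', Algebra.norm_complex_apply,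
      ← Complex.ofReal_eq_one, Complex.normSq_eq_conj_mul_self]
    exact (det_of_mem_unitary hU).1
  refine ⟨(continuous_const.matrix_mulVec continuous_id).measurable, ?_⟩
  have hmap := Measure.map_linearMap_addHaar_eq_smul_addHaar volume (f := f)
    (by rw [hdet]; exact one_ne_zero)
  rwa [hdet, inv_one, abs_one, ENNReal.ofReal_one, one_smul] at hmap

theorem integral_comp_mulVec_of_mem_unitaryGroup {E : Type*} [NormedAddCommGroup E]
    [NormedSpace ℝ E] {U : Matrix ι ι ℂ} (hU : U ∈ unitaryGroup ι ℂ) (g : (ι → ℂ) → E) :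
    ∫ z, g (U *ᵥ z) = ∫ z, g z := by
  have hinj : Function.Injective (U *ᵥ ·) := fun x y hxy => by
    simpa [mulVec_mulVec, Unitary.star_mul_self_of_mem hU] using congrArg (star U *ᵥ ·) hxy
  exact (measurePreserving_mulVec_of_mem_unitaryGroup hU).integral_comp
    ((continuous_const.matrix_mulVec continuous_id).measurableEmbedding hinj) g

theorem IsHermitian.re_star_dotProduct_mulVec_eigenvectorUnitary {𝕜 : Type*} [RCLike 𝕜]
    {A : Matrix ι ι 𝕜} (hA : A.IsHermitian) (w : ι → 𝕜) :
    RCLike.re (star ((hA.eigenvectorUnitary : Matrix ι ι 𝕜) *ᵥ w) ⬝ᵥ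
        A *ᵥ ((hA.eigenvectorUnitary : Matrix ι ι 𝕜) *ᵥ w)) =
      ∑ i, hA.eigenvalues i * ‖w i‖ ^ 2 := by
  set U : Matrix ι ι 𝕜 := (hA.eigenvectorUnitary : Matrix ι ι 𝕜)
  have hdiag : star U * A * U = diagonal (RCLike.ofReal ∘ hA.eigenvalues) := by
    simpa [Unitary.conjStarAlgAut_apply] using hA.conjStarAlgAut_star_eigenvectorUnitary
  rw [star_mulVec, mulVec_mulVec, dotProduct_mulVec, vecMul_vecMul, ← star_eq_conjTranspose,
    ← mul_assoc, hdiag, ← dotProduct_mulVec]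
  simp only [dotProduct, mulVec_diagonal, map_sum, Pi.star_apply, Function.comp_apply]
  refine Finset.sum_congr rfl fun i _ => ?_
  rw [mul_left_comm, RCLike.star_def, RCLike.conj_mul, ← RCLike.ofReal_pow, ← RCLike.ofReal_mul,
    RCLike.ofReal_re]

end Matrix

theorem integral_exp_neg_sum_mul_norm_sq {ι V : Type*} [Fintype ι] [NormedAddCommGroup V]
    [InnerProductSpace ℝ V] [FiniteDimensional ℝ V] [MeasurableSpace V] [BorelSpace V]
    {b : ι → ℝ} (hb : ∀ i, 0 < b i) :
    ∫ w : ι → V, rexp (-∑ i, b i * ‖w i‖ ^ 2) =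
      ∏ i, (π / b i) ^ (Module.finrank ℝ V / 2 : ℝ) := by
  have hfactor (w : ι → V) :
      rexp (-∑ i, b i * ‖w i‖ ^ 2) = ∏ i, rexp (-b i * ‖w i‖ ^ 2) := by
    simp only [← Finset.sum_neg_distrib, Real.exp_sum, neg_mul]
  simp only [hfactor]
  rw [integral_fintype_prod_volume_eq_prod (fun i (v : V) => rexp (-b i * ‖v‖ ^ 2))]
  exact Finset.prod_congr rfl fun i _ => GaussianFourier.integral_rexp_neg_mul_sq_norm (hb i)

/-- Gaussian integral with a positive definite Hermitian matrix A:
∫_{ℂ^N} exp(-(1/2) z̄ᵀ A z) dm(z) = (2π)^N / det A. -/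
theorem gaussian_integral_posdef (N : ℕ) (A : Matrix (Fin N) (Fin N) ℂ)
    (hA : A.PosDef) :
    ((∫ z : Fin N → ℂ,
        Real.exp (-(1 / 2) * (star z ⬝ᵥ A.mulVec z).re) : ℝ) : ℂ)
      = (2 * (π : ℂ)) ^ N / A.det := by
  have hH : A.IsHermitian := hA.1
  have hquad (w : Fin N → ℂ) :
      -(1 / 2) * (star (hH.eigenvectorUnitary.1 *ᵥ w) ⬝ᵥ A *ᵥ (hH.eigenvectorUnitary.1 *ᵥ w)).re =
        -∑ i, hH.eigenvalues i / 2 * ‖w i‖ ^ 2 := by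
    rw [← RCLike.re_to_complex, hH.re_star_dotProduct_mulVec_eigenvectorUnitary, Finset.mul_sum,
      ← Finset.sum_neg_distrib]
    congr 1 with i
    ring
  have hpos (i : Fin N) : 0 < hH.eigenvalues i / 2 := half_pos (hA.eigenvalues_pos i)
  have hfactor (i : Fin N) :
      (((π / (hH.eigenvalues i / 2)) ^ (Module.finrank ℝ ℂ / 2 : ℝ) : ℝ) : ℂ) =
        2 * π / hH.eigenvalues i := by
    rw [Complex.finrank_real_complex, Nat.cast_ofNat, div_self two_ne_zero, rpow_one]
    push_cast
    ring
  rw [← integral_comp_mulVec_of_mem_unitaryGroup hH.eigenvectorUnitary.2]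
  simp only [hquad]
  rw [integral_exp_neg_sum_mul_norm_sq hpos, Complex.ofReal_prod, hH.det_eq_prod_eigenvalues]
  simp only [hfactor, Finset.prod_div_distrib, Finset.prod_const, Finset.card_univ,
    Fintype.card_fin]
  rfl
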